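/- arXiv:1509.01864 — 2 statements merged into one kernel-verified Lean document; each statement's English description precedes it below -/
import Mathlib

section
/- Let (λ[t]) be a nonnegative, nonincreasing real sequence with Σ λ[t]² < ∞, and let 0 ≤ q < 1. Then the double sum Σ_{t=1}^{∞} Σ_{r=0}^{t-1} q^{t-r} λ[r] λ[t] is finite. -/
/-!
Since `2 |λ[r] λ[t]| ≤ λ[r]² + λ[t]²`, the double sum is dominated by two parts. The first,
`Σ_t Σ_{r<t} q^(t-r) λ[r]²`, is (up to the diagonal) the Cauchy product of the summable
sequences `λ²` and `q^k`; the second, `Σ_t λ[t]² Σ_{r<t} q^(t-r)`, is dominated by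
`Σ_t λ[t]² / (1 - q)`.
-/

open Finset

section GeometricKernel

variable {q : ℝ}

lemma sum_range_pow_sub_le (hq0 : 0 ≤ q) (hq1 : q < 1) (t : ℕ) :
    ∑ r ∈ range t, q ^ (t - r) ≤ (1 - q)⁻¹ :=
  calc ∑ r ∈ range t, q ^ (t - r)
      = ∑ j ∈ range t, q ^ (t - 1 - j + 1) :=
        sum_congr rfl fun r hr => by rw [mem_range] at hr; congr 1; omega
    _ = q * ∑ j ∈ range t, q ^ j := by
        rw [sum_range_reflect (fun j => q ^ (j + 1)), mul_sum]
        simp only [pow_succ']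
    _ ≤ ∑ j ∈ range t, q ^ j :=
        mul_le_of_le_one_left (sum_nonneg fun j _ => pow_nonneg hq0 j) hq1.le
    _ ≤ (1 - q)⁻¹ := by
        rw [range_eq_Ico, inv_eq_one_div, ← pow_zero q]
        exact geom_sum_Ico_le_of_lt_one hq0 hq1

lemma summable_sum_range_pow_sub_mul {f : ℕ → ℝ} (hq0 : 0 ≤ q) (hq1 : q < 1)
    (hf : Summable f) :
    Summable (fun t => ∑ r ∈ range t, q ^ (t - r) * f r) := by
  have hgeom : Summable (fun k => ‖q ^ k‖) := by
    simp_rw [norm_pow, Real.norm_of_nonneg hq0]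
    exact summable_geometric_of_lt_one hq0 hq1
  have hcauchy : Summable (fun t => ∑ r ∈ range (t + 1), f r * q ^ (t - r)) :=
    (summable_norm_sum_mul_range_of_summable_norm (f := f) (g := fun k => q ^ k)
      (summable_norm_iff.mpr hf) hgeom).of_norm
  refine (hcauchy.sub hf).congr fun t => ?_
  rw [sum_range_succ, Nat.sub_self, pow_zero, mul_one, add_sub_cancel_right]
  exact sum_congr rfl fun r _ => mul_comm _ _

lemma summable_sum_range_pow_sub_mul_mul {f g : ℕ → ℝ} (hq0 : 0 ≤ q) (hq1 : q < 1)
    (hf : Summable (fun t => f t ^ 2)) (hg : Summable (fun t => g t ^ 2)) :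
    Summable (fun t => ∑ r ∈ range t, q ^ (t - r) * f r * g t) := by
  refine ((summable_sum_range_pow_sub_mul hq0 hq1 hf).add
    (hg.mul_left (1 - q)⁻¹)).of_norm_bounded fun t => ?_
  have hamgm : ∀ r,
      ‖q ^ (t - r) * f r * g t‖ ≤ q ^ (t - r) * f r ^ 2 + q ^ (t - r) * g t ^ 2 := by
    intro r
    have hqr : 0 ≤ q ^ (t - r) := pow_nonneg hq0 _
    rw [norm_mul, norm_mul, Real.norm_of_nonneg hqr, Real.norm_eq_abs, Real.norm_eq_abs,
      mul_assoc, ← mul_add]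
    refine mul_le_mul_of_nonneg_left ?_ hqr
    nlinarith [sq_abs (f r), sq_abs (g t), two_mul_le_add_sq |f r| |g t|]
  calc ‖∑ r ∈ range t, q ^ (t - r) * f r * g t‖
      ≤ ∑ r ∈ range t, (q ^ (t - r) * f r ^ 2 + q ^ (t - r) * g t ^ 2) :=
        (norm_sum_le _ _).trans (sum_le_sum fun r _ => hamgm r)
    _ = ∑ r ∈ range t, q ^ (t - r) * f r ^ 2 + (∑ r ∈ range t, q ^ (t - r)) * g t ^ 2 := by
        rw [sum_add_distrib, sum_mul]
    _ ≤ ∑ r ∈ range t, q ^ (t - r) * f r ^ 2 + (1 - q)⁻¹ * g t ^ 2 := by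
        gcongr; exact sum_range_pow_sub_le hq0 hq1 t

end GeometricKernel

theorem stmt2_general (l : ℕ → ℝ) (q : ℝ)
    (hsq : Summable (fun t => (l t) ^ 2))
    (hq0 : 0 ≤ q) (hq1 : q < 1) :
    Summable (fun t => ∑ r ∈ Finset.range t, q ^ (t - r) * l r * l t) :=
  summable_sum_range_pow_sub_mul_mul hq0 hq1 hsq hsq

theorem stmt2 (l : ℕ → ℝ) (q : ℝ)
    (hl0 : ∀ t, 0 ≤ l t) (hmono : ∀ t, l (t + 1) ≤ l t)
    (hsq : Summable (fun t => (l t) ^ 2))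
    (hq0 : 0 ≤ q) (hq1 : q < 1) :
    Summable (fun t => ∑ r ∈ Finset.range t, q ^ (t - r) * l r * l t) :=
  stmt2_general l q hsq hq0 hq1
end

section
/- Let h₁, ..., h_m : ℝ → ℝ be convex differentiable functions and let Y = ⋃_{p ∈ C} argmin p, where C is the set of functions p(x) = Σ_i α_i h_i(x) over all convex coefficient vectors α lying in a convex set A of admissible coefficient vectors containing, for any two members α, β ∈ A and any ζ ∈ [0,1], the vector ζα + (1−ζ)β. Then Y is a convex subset of ℝ. In particular, if x₁ ∈ argmin p₁ and x₂ ∈ argmin p₂ with p₁, p₂ ∈ C and x₁ < x_α < x₂ with p₁'(x_α) > 0 and p₂'(x_α) < 0, then there is ζ ∈ [0,1] with ζ p₁'(x_α) + (1−ζ) p₂'(x_α) = 0, so x_α ∈ argmin(ζ p₁ + (1−ζ) p₂) ⊆ Y. -/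
/-!
On `ℝ`, a convex differentiable function is minimized exactly where its derivative vanishes, and
its derivative is monotone. So if `a` minimizes `p` and `b` minimizes `q`, with `a ≤ z ≤ b`, then
`p' z ≥ 0 ≥ q' z`, and some convex combination `s p + t q` has zero derivative, hence a minimum,
at `z`. When `p` and `q` are the weighted sums of the `hᵢ` for `α, β ∈ A`, this combination is the
weighted sum for `s α + t β ∈ A`. Thus the union of the argmin sets is order-connected, i.e. convex.
-/

open Set

theorem ConvexOn.fun_finsetSum {𝕜 E β ι : Type*} [Semiring 𝕜] [PartialOrder 𝕜]
    [AddCommMonoid E] [AddCommMonoid β] [PartialOrder β] [IsOrderedAddMonoid β]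
    [SMul 𝕜 E] [Module 𝕜 β] {s : Set E} (hs : Convex 𝕜 s) (t : Finset ι) {f : ι → E → β}
    (hf : ∀ i ∈ t, ConvexOn 𝕜 s (f i)) : ConvexOn 𝕜 s (fun x => ∑ i ∈ t, f i x) := by
  classical
  induction t using Finset.induction_on with
  | empty => simpa using convexOn_const 0 hs
  | insert i t hi ih =>
    simp only [Finset.sum_insert hi]
    exact (hf i (t.mem_insert_self i)).add (ih fun j hj => hf j (Finset.mem_insert_of_mem hj))

theorem ConvexOn.isMinOn_univ_iff_deriv_eq_zero {f : ℝ → ℝ} (hf : ConvexOn ℝ univ f)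
    (hd : Differentiable ℝ f) {x : ℝ} : IsMinOn f univ x ↔ deriv f x = 0 := by
  refine ⟨fun hmin => (hmin.isLocalMin Filter.univ_mem).deriv_eq_zero, fun hx => ?_⟩
  refine hf.isMinOn_of_rightDeriv_eq_zero (by simp) ?_
  rw [(hd x).hasDerivAt.hasDerivWithinAt.derivWithin (uniqueDiffWithinAt_Ioi x), hx]

theorem exists_isMinOn_convexCombination_of_mem_Icc {f g : ℝ → ℝ}
    (hf : ConvexOn ℝ univ f) (hg : ConvexOn ℝ univ g)
    (hfd : Differentiable ℝ f) (hgd : Differentiable ℝ g) {a b z : ℝ}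
    (ha : IsMinOn f univ a) (hb : IsMinOn g univ b) (hz : z ∈ Icc a b) :
    ∃ s t : ℝ, 0 ≤ s ∧ 0 ≤ t ∧ s + t = 1 ∧ IsMinOn (fun x => s * f x + t * g x) univ z := by
  have hfz : 0 ≤ deriv f z := by
    simpa [(hf.isMinOn_univ_iff_deriv_eq_zero hfd).1 ha] using
      hf.monotoneOn_deriv (fun x _ => hfd x) (mem_univ a) (mem_univ z) hz.1
  have hgz : deriv g z ≤ 0 := by
    simpa [(hg.isMinOn_univ_iff_deriv_eq_zero hgd).1 hb] using
      hg.monotoneOn_deriv (fun x _ => hgd x) (mem_univ z) (mem_univ b) hz.2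
  have hzero : (0 : ℝ) ∈ segment ℝ (deriv f z) (deriv g z) := by
    rw [segment_eq_uIcc]
    exact ⟨inf_le_right.trans hgz, hfz.trans le_sup_left⟩
  obtain ⟨s, t, hs, ht, hst, hcomb⟩ := hzero
  have hconv : ConvexOn ℝ univ (fun x => s * f x + t * g x) := (hf.smul hs).add (hg.smul ht)
  have hderiv (x : ℝ) : HasDerivAt (fun x => s * f x + t * g x)
      (s * deriv f x + t * deriv g x) x :=
    ((hfd x).hasDerivAt.const_mul s).add ((hgd x).hasDerivAt.const_mul t)
  refine ⟨s, t, hs, ht, hst, ?_⟩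
  rw [hconv.isMinOn_univ_iff_deriv_eq_zero fun x => (hderiv x).differentiableAt,
    (hderiv z).deriv]
  exact hcomb

theorem convexOn_univ_sum_mul {ι : Type*} [Fintype ι] {h : ι → ℝ → ℝ}
    (hconv : ∀ i, ConvexOn ℝ univ (h i)) {α : ι → ℝ} (hα : ∀ i, 0 ≤ α i) :
    ConvexOn ℝ univ (fun x => ∑ i, α i * h i x) :=
  ConvexOn.fun_finsetSum convex_univ _ fun i _ => (hconv i).smul (hα i)

theorem stmt13_general (m : ℕ) (h : Fin m → ℝ → ℝ) (A : Set (Fin m → ℝ))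
    (hconv : ∀ i, ConvexOn ℝ Set.univ (h i))
    (hdiff : ∀ i, Differentiable ℝ (h i))
    (hA : Convex ℝ A) (hAnn : ∀ α ∈ A, ∀ i, 0 ≤ α i) :
    Convex ℝ (⋃ α ∈ A, {x : ℝ | ∀ y, ∑ i, α i * h i x ≤ ∑ i, α i * h i y}) := by
  have hdiff_sum (α : Fin m → ℝ) : Differentiable ℝ (fun x => ∑ i, α i * h i x) :=
    Differentiable.fun_sum fun i _ => (hdiff i).const_mul (α i)
  rw [convex_iff_ordConnected, ordConnected_iff]
  rintro x hx y hy - z hz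
  obtain ⟨α, hα, hx⟩ := mem_iUnion₂.1 hx
  obtain ⟨β, hβ, hy⟩ := mem_iUnion₂.1 hy
  obtain ⟨s, t, hs, ht, hst, hz⟩ := exists_isMinOn_convexCombination_of_mem_Icc
    (convexOn_univ_sum_mul hconv (hAnn α hα)) (convexOn_univ_sum_mul hconv (hAnn β hβ))
    (hdiff_sum α) (hdiff_sum β) (isMinOn_univ_iff.2 hx) (isMinOn_univ_iff.2 hy) hz
  refine mem_biUnion (hA hα hβ hs ht hst) fun w => ?_
  simpa only [Pi.add_apply, Pi.smul_apply, smul_eq_mul, add_mul, mul_assoc,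
    Finset.sum_add_distrib, ← Finset.mul_sum] using isMinOn_univ_iff.1 hz w

theorem stmt13 (m : ℕ) (h : Fin m → ℝ → ℝ) (A : Set (Fin m → ℝ))
    (hconv : ∀ i, ConvexOn ℝ Set.univ (h i))
    (hdiff : ∀ i, Differentiable ℝ (h i))
    (hA : Convex ℝ A) (hAnn : ∀ α ∈ A, ∀ i, 0 ≤ α i)
    (hargmin : ∀ α ∈ A,
      ({x : ℝ | ∀ y, ∑ i, α i * h i x ≤ ∑ i, α i * h i y}).Nonempty) :
    Convex ℝ (⋃ α ∈ A, {x : ℝ | ∀ y, ∑ i, α i * h i x ≤ ∑ i, α i * h i y}) :=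
  stmt13_general m h A hconv hdiff hA hAnn
end
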